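/- arXiv:2411.01504 — 7 statements merged into one kernel-verified Lean document; each statement's English description precedes it below -/
import Mathlib

section
/- Let H be a subgroup of the affine general linear group AGL(1, F_q) (the group of maps x ↦ ax + b with a ∈ F_q*, b ∈ F_q, under composition). For any α ∈ F_q, the polynomial g(x) = ∏_{f ∈ H} (x − f(α)) is constant on the orbits of H acting on F_q; that is, for any β ∈ F_q and any θ ∈ H, g(θ(β)) = g(β). -/
/-!
An affine map `θ(x) = a x + b` scales differences by `a`, so reindexing the product by
`f ↦ θ ∘ f` gives `g(θ β) = ∏_{f ∈ H} (θ β - θ (f α)) = a ^ |H| · g(β)`. The slope map is a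
group homomorphism, so `a ^ |H| = 1` by Lagrange.
-/

open Polynomial

theorem LinearMap.apply_eq_mul_apply_one {k : Type*} [CommSemiring k] (L : k →ₗ[k] k) (x : k) :
    L x = x * L 1 := by
  rw [← smul_eq_mul, ← map_smul, smul_eq_mul, mul_one]

namespace AffineEquiv

variable {k : Type*} [CommRing k]

/-- The coefficient `a` of an affine automorphism `x ↦ a x + b` of the line. -/
def slope : (k ≃ᵃ[k] k) →* k where
  toFun f := f.linear 1
  map_one' := rfl
  map_mul' f _ := ((f.linear : k →ₗ[k] k).apply_eq_mul_apply_one _).trans (mul_comm _ _)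

theorem sub_eq_slope_mul (f : k ≃ᵃ[k] k) (x y : k) : f x - f y = slope f * (x - y) :=
  calc f x - f y = f.linear (x - y) := ((f : k →ᵃ[k] k).linearMap_vsub x y).symm
    _ = slope f * (x - y) :=
      ((f.linear : k →ₗ[k] k).apply_eq_mul_apply_one _).trans (mul_comm _ _)

theorem slope_pow_card_eq_one {H : Subgroup (k ≃ᵃ[k] k)} [Fintype H] {θ : k ≃ᵃ[k] k}
    (hθ : θ ∈ H) : slope θ ^ Fintype.card H = 1 := by
  have h := congrArg (slope.comp H.subtype) (pow_card_eq_one (G := H) (x := ⟨θ, hθ⟩))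
  rwa [map_pow, map_one] at h

theorem prod_sub_apply_eq_of_mem {H : Subgroup (k ≃ᵃ[k] k)} [Fintype H] {θ : k ≃ᵃ[k] k}
    (hθ : θ ∈ H) (α β : k) :
    ∏ f : H, (θ β - (f : k ≃ᵃ[k] k) α) = ∏ f : H, (β - (f : k ≃ᵃ[k] k) α) :=
  calc ∏ f : H, (θ β - (f : k ≃ᵃ[k] k) α)
      = ∏ f : H, (θ β - θ ((f : k ≃ᵃ[k] k) α)) :=
        (Fintype.prod_equiv (Equiv.mulLeft ⟨θ, hθ⟩) _ _ fun _ ↦ by rfl).symm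
    _ = ∏ f : H, (slope θ * (β - (f : k ≃ᵃ[k] k) α)) := by simp only [sub_eq_slope_mul]
    _ = slope θ ^ Fintype.card H * ∏ f : H, (β - (f : k ≃ᵃ[k] k) α) := by
        rw [Finset.prod_mul_distrib, Finset.prod_const, Finset.card_univ]
    _ = ∏ f : H, (β - (f : k ≃ᵃ[k] k) α) := by rw [slope_pow_card_eq_one hθ, one_mul]

end AffineEquiv

theorem stmt_0_general (F : Type) [Field F]
    (H : Subgroup (F ≃ᵃ[F] F)) [Fintype H] (α : F) :
    ∀ β : F, ∀ θ ∈ H,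
      (∏ f : H, (X - C ((f : F ≃ᵃ[F] F) α))).eval (θ β)
        = (∏ f : H, (X - C ((f : F ≃ᵃ[F] F) α))).eval β := by
  intro β θ hθ
  simp only [eval_prod, eval_sub, eval_X, eval_C]
  exact AffineEquiv.prod_sub_apply_eq_of_mem hθ α β

/-- Let `H` be a subgroup of `AGL(1, F_q)` (realized as the group of affine
equivalences `F ≃ᵃ[F] F`, i.e. maps `x ↦ a x + b` with `a ≠ 0`). For any `α ∈ F_q`, the
polynomial `g(x) = ∏_{f ∈ H} (x − f(α))` is constant on the orbits of `H` acting on `F_q`: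
for any `β` and `θ ∈ H`, `g(θ(β)) = g(β)`. -/
theorem stmt_0 (F : Type) [Field F] [Fintype F]
    (H : Subgroup (F ≃ᵃ[F] F)) [Fintype H] (α : F) :
    ∀ β : F, ∀ θ ∈ H,
      (∏ f : H, (X - C ((f : F ≃ᵃ[F] F) α))).eval (θ β)
        = (∏ f : H, (X - C ((f : F ≃ᵃ[F] F) α))).eval β :=
  stmt_0_general F H α
end

section
/- Let K be a subfield of F_q, B a K-linear subspace of F_q, M a subgroup of K*, and H = { x ↦ ax + b : a ∈ M, b ∈ B } ≤ AGL(1, F_q). For α ∈ F_q, the orbit of α under H has size |B| if α ∈ B, and size |M|·|B| if α ∉ B. -/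
/-- With `K` a subfield of `F_q`, `B` a `K`-linear subspace, `M ≤ K*`,
and `H = { x ↦ a x + b : a ∈ M, b ∈ B }`, the orbit of `α ∈ F_q` under `H`
has size `|B|` if `α ∈ B`, and size `|M|·|B|` if `α ∉ B`. -/
theorem stmt_3 (F : Type) [Field F] [Fintype F] (K : Type) [Field K] [Algebra K F]
    (B : Submodule K F) (M : Subgroup Kˣ) (α : F) :
    (α ∈ B →
      {y : F | ∃ a ∈ M, ∃ b ∈ B, y = algebraMap K F (a : K) * α + b}.ncard = Nat.card B) ∧
    (α ∉ B →
      {y : F | ∃ a ∈ M, ∃ b ∈ B, y = algebraMap K F (a : K) * α + b}.ncard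
        = Nat.card M * Nat.card B) := by
  constructor
  · intro hα
    have hset : {y : F | ∃ a ∈ M, ∃ b ∈ B, y = algebraMap K F (a : K) * α + b}
        = (B : Set F) := by
      ext y
      constructor
      · rintro ⟨a, _, b, hb, rfl⟩
        exact B.add_mem (by rw [← Algebra.smul_def]; exact B.smul_mem _ hα) hb
      · intro hy
        exact ⟨1, M.one_mem, y - α, B.sub_mem hy hα, by simp⟩
    rw [hset]; exact (Nat.card_coe_set_eq _).symm
  · intro hα
    set f : M × B → F := fun p => algebraMap K F ((p.1 : Kˣ) : K) * α + (p.2 : F) with hf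
    have hrange : {y : F | ∃ a ∈ M, ∃ b ∈ B, y = algebraMap K F (a : K) * α + b}
        = Set.range f := by
      ext y
      constructor
      · rintro ⟨a, ha, b, hb, rfl⟩
        exact ⟨(⟨a, ha⟩, ⟨b, hb⟩), rfl⟩
      · rintro ⟨⟨a, b⟩, rfl⟩
        exact ⟨a, a.2, b, b.2, rfl⟩
    have hinj : Function.Injective f := by
      rintro ⟨a₁, b₁⟩ ⟨a₂, b₂⟩ h
      simp only [hf] at h
      have ha : (a₁ : Kˣ) = (a₂ : Kˣ) := by
        by_contra hne
        have hne' : ((a₁ : Kˣ) : K) ≠ ((a₂ : Kˣ) : K) := fun h' => hne (Units.ext h')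
        have hc : ((a₁ : Kˣ) : K) - ((a₂ : Kˣ) : K) ≠ 0 := sub_ne_zero.mpr hne'
        set c : K := ((a₁ : Kˣ) : K) - ((a₂ : Kˣ) : K)
        have hcα : c • α = (b₂ : F) - (b₁ : F) := by
          rw [Algebra.smul_def, map_sub]
          linear_combination h
        have : α ∈ B := by
          have : c⁻¹ • (c • α) ∈ B := by
            rw [hcα]; exact B.smul_mem _ (B.sub_mem b₂.2 b₁.2)
          rwa [smul_smul, inv_mul_cancel₀ hc, one_smul] at this
        exact hα this
      have hb : (b₁ : F) = (b₂ : F) := by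
        rw [ha] at h
        exact add_left_cancel h
      exact Prod.ext (Subtype.ext ha) (Subtype.ext hb)
    rw [hrange, ← Nat.card_coe_set_eq, Nat.card_range_of_injective hinj, Nat.card_prod]
end

section
/- Let A ⊆ F_q be a set of size n partitioned into disjoint sets A_1, ..., A_{n/(r+1)} each of size r+1, and suppose there exists a good polynomial g ∈ F_q[x] of degree r+1 that is constant on each A_i. Let R be the set of polynomials of degree less than n that are constant on each A_i. Then R is an F_q-vector space of dimension n/(r+1), and the polynomials 1, g, g^2, ..., g^{n/(r+1)−1} form a basis of R. -/
open Polynomial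

/-!
Every power `g ^ k` with `k < n / (r + 1)` has degree `< n` and is constant on the parts, and the
powers of a nonconstant polynomial are linearly independent since it is transcendental over `F`.
Conversely, a polynomial of degree `< n` that is constant on the parts is determined by its values
at one point of each part: if these values vanish, it vanishes on all `n` points of `A`. Hence
the space has dimension at most the number of parts, and the independent powers span it.
-/

theorem Transcendental.linearIndependent_pow {R A : Type*} [CommRing R] [Ring A] [Algebra R A]
    {x : A} (hx : Transcendental R x) : LinearIndependent R (x ^ · : ℕ → A) := by
  have hker : LinearMap.ker (Polynomial.aeval x).toLinearMap = ⊥ :=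
    LinearMap.ker_eq_bot_of_injective (transcendental_iff_injective.mp hx)
  simpa [Function.comp_def] using (basisMonomials R).linearIndependent.map' _ hker

namespace Polynomial

variable {F ι : Type*} [Field F]

def degreeLTConstOnParts (n : ℕ) (P : ι → Finset F) : Submodule F F[X] where
  carrier := {f | f.degree < n ∧ ∀ i, ∀ α ∈ P i, ∀ β ∈ P i, f.eval α = f.eval β}
  zero_mem' := ⟨by simp, by simp⟩
  add_mem' hf hh := ⟨(degree_add_le _ _).trans_lt (max_lt hf.1 hh.1),
    fun i α hα β hβ => by simp [hf.2 i α hα β hβ, hh.2 i α hα β hβ]⟩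
  smul_mem' a f hf := ⟨(degree_smul_le a f).trans_lt hf.1,
    fun i α hα β hβ => by simp [hf.2 i α hα β hβ]⟩

theorem linearIndependent_pow_of_natDegree_ne_zero {g : F[X]} (hg : g.natDegree ≠ 0) :
    LinearIndependent F (g ^ · : ℕ → F[X]) :=
  (g.transcendental hg (mem_nonZeroDivisors_of_ne_zero fun h => hg (by simp_all))
    ).linearIndependent_pow

variable {n : ℕ} {P : ι → Finset F}

theorem pow_mem_degreeLTConstOnParts {g : F[X]}
    (hg : ∀ i, ∀ α ∈ P i, ∀ β ∈ P i, g.eval α = g.eval β) {k : ℕ} (hk : k * g.natDegree < n) :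
    g ^ k ∈ degreeLTConstOnParts n P := by
  refine ⟨degree_le_natDegree.trans_lt ?_, fun i α hα β hβ => by simp [hg i α hα β hβ]⟩
  rw [natDegree_pow]
  exact_mod_cast hk

variable (n P) in
/-- `Classical.epsilon` picks an arbitrary point of `F` for an empty part. -/
noncomputable def evalAtParts : degreeLTConstOnParts n P →ₗ[F] (ι → F) :=
  (LinearMap.pi fun i => leval (Classical.epsilon (· ∈ P i))) ∘ₗ Submodule.subtype _

theorem evalAtParts_injective [Fintype ι] [DecidableEq F]
    (hn : n ≤ (Finset.univ.biUnion P).card) : Function.Injective (evalAtParts n P) := by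
  refine (injective_iff_map_eq_zero _).mpr fun ⟨f, hdeg, hconst⟩ hf => ?_
  have hroots : ∀ x ∈ Finset.univ.biUnion P, f.eval x = 0 := by
    intro x hx
    obtain ⟨i, -, hxi⟩ := Finset.mem_biUnion.mp hx
    rw [hconst i x hxi _ (Classical.epsilon_spec ⟨x, hxi⟩)]
    exact congr_fun hf i
  exact Subtype.ext <| eq_zero_of_degree_lt_of_eval_finset_eq_zero _
    (hdeg.trans_le (by exact_mod_cast hn)) hroots

theorem span_pow_eq_degreeLTConstOnParts [DecidableEq F] {m : ℕ} {P : Fin m → Finset F}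
    (hn : n ≤ (Finset.univ.biUnion P).card) {g : F[X]} (hg0 : g.natDegree ≠ 0)
    (hgn : m * g.natDegree ≤ n) (hg : ∀ i, ∀ α ∈ P i, ∀ β ∈ P i, g.eval α = g.eval β) :
    Submodule.span F (Set.range fun i : Fin m => g ^ (i : ℕ)) = degreeLTConstOnParts n P := by
  have hli : LinearIndependent F fun i : Fin m => g ^ (i : ℕ) :=
    (linearIndependent_pow_of_natDegree_ne_zero hg0).comp _ Fin.val_injective
  have hinj := evalAtParts_injective hn
  have : FiniteDimensional F (degreeLTConstOnParts n P) := .of_injective _ hinj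
  refine Submodule.eq_of_le_of_finrank_le (Submodule.span_le.mpr ?_) ?_
  · rintro _ ⟨k, rfl⟩
    exact pow_mem_degreeLTConstOnParts hg
      ((Nat.mul_lt_mul_of_pos_right k.isLt (Nat.pos_of_ne_zero hg0)).trans_le hgn)
  · rw [finrank_span_eq_card hli, Fintype.card_fin]
    simpa using LinearMap.finrank_le_finrank_of_injective hinj

end Polynomial

theorem stmt_6_general (F : Type) [Field F] [DecidableEq F] (n r : ℕ)
    (A : Finset F) (hA : A.card = n)
    (P : Fin (n / (r + 1)) → Finset F)
    (hunion : A = Finset.univ.biUnion P)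
    (g : Polynomial F) (hgdeg : g.natDegree = r + 1)
    (hgconst : ∀ i, ∀ α ∈ P i, ∀ β ∈ P i, g.eval α = g.eval β) :
    ∃ V : Submodule F (Polynomial F),
      (V : Set (Polynomial F)) =
        {f : Polynomial F | f.degree < (n : WithBot ℕ) ∧
          ∀ i, ∀ α ∈ P i, ∀ β ∈ P i, f.eval α = f.eval β} ∧
      Module.finrank F V = n / (r + 1) ∧
      LinearIndependent F (fun i : Fin (n / (r + 1)) => g ^ (i : ℕ)) ∧
      Submodule.span F (Set.range (fun i : Fin (n / (r + 1)) => g ^ (i : ℕ))) = V := by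
  have hg0 : g.natDegree ≠ 0 := by omega
  have hspan : Submodule.span F (Set.range fun i : Fin (n / (r + 1)) => g ^ (i : ℕ)) =
      degreeLTConstOnParts n P :=
    span_pow_eq_degreeLTConstOnParts (by rw [← hunion, hA]) hg0
      (hgdeg ▸ Nat.div_mul_le_self n (r + 1)) hgconst
  have hli : LinearIndependent F fun i : Fin (n / (r + 1)) => g ^ (i : ℕ) :=
    (linearIndependent_pow_of_natDegree_ne_zero hg0).comp _ Fin.val_injective
  refine ⟨_, rfl, ?_, hli, hspan⟩
  rw [← hspan, finrank_span_eq_card hli, Fintype.card_fin]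

/-- Let `A ⊆ F_q` of size `n` be partitioned into `n/(r+1)` disjoint sets each
of size `r+1`, and let `g` be a good polynomial of degree `r+1` (constant on each part). Let `R`
be the set of polynomials of degree `< n` that are constant on each part. Then `R` is an
`F_q`-subspace of dimension `n/(r+1)`, and `1, g, g², …, g^{n/(r+1)−1}` form a basis of `R`. -/
theorem stmt_6 (F : Type) [Field F] [Fintype F] [DecidableEq F] (n r : ℕ)
    (hdvd : (r + 1) ∣ n) (A : Finset F) (hA : A.card = n)
    (P : Fin (n / (r + 1)) → Finset F)
    (hunion : A = Finset.univ.biUnion P)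
    (hdisj : ∀ i j, i ≠ j → Disjoint (P i) (P j))
    (hcard : ∀ i, (P i).card = r + 1)
    (g : Polynomial F) (hgdeg : g.natDegree = r + 1)
    (hgconst : ∀ i, ∀ α ∈ P i, ∀ β ∈ P i, g.eval α = g.eval β) :
    ∃ V : Submodule F (Polynomial F),
      (V : Set (Polynomial F)) =
        {f : Polynomial F | f.degree < (n : WithBot ℕ) ∧
          ∀ i, ∀ α ∈ P i, ∀ β ∈ P i, f.eval α = f.eval β} ∧
      Module.finrank F V = n / (r + 1) ∧
      LinearIndependent F (fun i : Fin (n / (r + 1)) => g ^ (i : ℕ)) ∧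
      Submodule.span F (Set.range (fun i : Fin (n / (r + 1)) => g ^ (i : ℕ))) = V :=
  stmt_6_general F n r A hA P hunion g hgdeg hgconst
end

section
/- Let g be a good polynomial of degree r+1 for a partition of A (|A| = n = u(r+1)) into u parts of size r+1, and let h be the annihilator polynomial of A. Then for any nonnegative integer j, the polynomial g^j mod h has degree at most n − (r+1). -/
open Polynomial

/-- Let `g` be a good polynomial of degree `r+1` for a partition of `A`
(`|A| = n = u(r+1)`) into `u` parts of size `r+1`, and let `h` be the annihilator polynomial
of `A`. Then for any `j ≥ 0`, the polynomial `g^j mod h` has degree at most `n − (r+1)`. -/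
theorem stmt_8 (F : Type) [Field F] [Fintype F] [DecidableEq F] (n r u : ℕ)
    (hn : n = u * (r + 1)) (A : Finset F) (hA : A.card = n)
    (P : Fin u → Finset F)
    (hunion : A = Finset.univ.biUnion P)
    (hdisj : ∀ i j, i ≠ j → Disjoint (P i) (P j))
    (hcard : ∀ i, (P i).card = r + 1)
    (g : Polynomial F) (hgdeg : g.natDegree = r + 1)
    (hgconst : ∀ i, ∀ α ∈ P i, ∀ β ∈ P i, g.eval α = g.eval β) :
    ∀ j : ℕ, (g ^ j %ₘ (∏ α ∈ A, (X - C α))).degree ≤ ((n - (r + 1) : ℕ) : WithBot ℕ) := by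
  intro j
  rcases Nat.eq_zero_or_pos u with hu | hu
  · -- then A = ∅ and the product is 1
    have hAempty : A = ∅ := by
      rw [hunion]
      apply Finset.eq_empty_of_forall_notMem
      intro x hx
      rw [Finset.mem_biUnion] at hx
      obtain ⟨i, _, _⟩ := hx
      exact absurd i.2 (by omega)
    subst hAempty
    simp [Polynomial.modByMonic_one]
  · -- main case
    have hmono : (∏ α ∈ A, (X - C α)).Monic :=
      monic_prod_of_monic _ _ fun α _ => monic_X_sub_C α
    set S : Finset F := A.image g.eval with hS
    have hScard : S.card ≤ u := by
      calc S.card = ((Finset.univ.biUnion P).image g.eval).card := by rw [hS, hunion]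
        _ = (Finset.univ.biUnion fun i => (P i).image g.eval).card := by
            rw [Finset.biUnion_image]
        _ ≤ ∑ i : Fin u, ((P i).image g.eval).card := Finset.card_biUnion_le
        _ ≤ ∑ _i : Fin u, 1 := by
            apply Finset.sum_le_sum
            intro i _
            rw [Finset.card_le_one]
            intro a ha b hb
            simp only [Finset.mem_image] at ha hb
            obtain ⟨x, hx, hxa⟩ := ha
            obtain ⟨y, hy, hyb⟩ := hb
            rw [← hxa, ← hyb]
            exact hgconst i x hx y hy
        _ = u := by simp
    set q : Polynomial F := Lagrange.interpolate S id (fun y => y ^ j) with hq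
    have hinj : Set.InjOn (id : F → F) S := Function.injective_id.injOn
    have hqdeg : q.degree < (S.card : WithBot ℕ) := Lagrange.degree_interpolate_lt _ hinj
    set p : Polynomial F := q.comp g with hp
    have hpdeg : p.natDegree ≤ (u - 1) * (r + 1) := by
      rw [hp, natDegree_comp, hgdeg]
      apply Nat.mul_le_mul_right
      have : q.degree < (u : WithBot ℕ) := lt_of_lt_of_le hqdeg (by exact_mod_cast hScard)
      rcases eq_or_ne q 0 with h0 | h0
      · simp [h0]
      · have := (natDegree_lt_iff_degree_lt h0).mpr (by exact_mod_cast this)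
        omega
    -- p agrees with g^j on A
    have heval : ∀ α ∈ A, (g ^ j - p).eval α = 0 := by
      intro α hα
      have hmem : g.eval α ∈ S := Finset.mem_image_of_mem _ hα
      have := Lagrange.eval_interpolate_at_node (fun y => y ^ j) hinj hmem
      simp only [hp, eval_sub, eval_pow, eval_comp]
      rw [← hq] at this
      simp only [id] at this
      rw [this]
      ring
    have hdvd : (∏ α ∈ A, (X - C α)) ∣ g ^ j - p := by
      apply Finset.prod_dvd_of_coprime
      · intro a ha b hb hab
        exact pairwise_coprime_X_sub_C Function.injective_id hab
      · intro a ha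
        exact dvd_iff_isRoot.mpr (heval a ha)
    have hmod : g ^ j %ₘ (∏ α ∈ A, (X - C α)) = p %ₘ (∏ α ∈ A, (X - C α)) :=
      modByMonic_eq_of_dvd_sub hmono hdvd
    have hdegprod : (∏ α ∈ A, (X - C α)).natDegree = n := by
      rw [natDegree_prod _ _ (fun α _ => X_sub_C_ne_zero α)]
      simp [hA]
    have hkey : (u - 1) * (r + 1) = n - (r + 1) := by
      rw [hn, Nat.sub_mul, one_mul]
    have hlt : (u - 1) * (r + 1) < n := by
      rw [hn]
      exact Nat.mul_lt_mul_of_lt_of_le (by omega) le_rfl (Nat.succ_pos r)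
    have hplt : p.degree < (∏ α ∈ A, (X - C α)).degree := by
      rw [degree_eq_natDegree hmono.ne_zero, hdegprod]
      calc p.degree ≤ (p.natDegree : WithBot ℕ) := degree_le_natDegree
        _ < (n : WithBot ℕ) := by exact_mod_cast lt_of_le_of_lt hpdeg hlt
    have hpmod : p %ₘ (∏ α ∈ A, (X - C α)) = p := (modByMonic_eq_self_iff hmono).mpr hplt
    rw [hmod, hpmod]
    calc p.degree ≤ (p.natDegree : WithBot ℕ) := degree_le_natDegree
      _ ≤ ((n - (r + 1) : ℕ) : WithBot ℕ) := by
        exact_mod_cast hkey ▸ hpdeg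
end

section
/- Let n, k, r, u be positive integers with u = n/(r+1), r ≥ 2, n/2 < k ≤ nr/(r+1). Define ℓ = (r+1)((k−u)/(r−1)) − 2 if (r−1) divides (k−u), and ℓ = (r+1)⌊(k−u)/(r−1)⌋ + ((k−u) mod (r−1)) otherwise; define ℓ' analogously with k replaced by n−k. Then ℓ + ℓ' ≤ n − 2. -/
/-- With `u = n/(r+1)`, `r ≥ 2`, `n/2 < k ≤ nr/(r+1)`, and
`ℓ = (r+1)((k−u)/(r−1)) − 2` if `(r−1) ∣ (k−u)`, else
`ℓ = (r+1)⌊(k−u)/(r−1)⌋ + ((k−u) mod (r−1))`, and `ℓ'` defined analogously with `k`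
replaced by `n−k`, we have `ℓ + ℓ' ≤ n − 2`. -/
theorem stmt_9 (n k r u : ℕ) (hr : 2 ≤ r) (hdvd : (r + 1) ∣ n) (hu : u = n / (r + 1))
    (hk₁ : n < 2 * k) (hk₂ : k * (r + 1) ≤ n * r) :
    (if (r - 1) ∣ (k - u) then (r + 1) * ((k - u) / (r - 1)) - 2
      else (r + 1) * ((k - u) / (r - 1)) + (k - u) % (r - 1)) +
    (if (r - 1) ∣ (n - k - u) then (r + 1) * ((n - k - u) / (r - 1)) - 2
      else (r + 1) * ((n - k - u) / (r - 1)) + (n - k - u) % (r - 1)) ≤ n - 2 := by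
  set t := r - 1 with htdef
  have hrt : r = t + 1 := by omega
  have ht : 1 ≤ t := by omega
  have hn : n = (t + 2) * u := by
    rw [hu, show t + 2 = r + 1 by omega]
    exact (Nat.mul_div_cancel' hdvd).symm
  have hn' : n = t * u + 2 * u := by rw [hn]; ring
  have htu : u ≤ t * u := Nat.le_mul_of_pos_left u ht
  have hku : k ≤ u * (t + 1) := by
    have h1 : k * (t + 2) ≤ (u * (t + 1)) * (t + 2) := by
      calc k * (t + 2) = k * (r + 1) := by rw [hrt]
        _ ≤ n * r := hk₂
        _ = (u * (t + 1)) * (t + 2) := by rw [hn, hrt]; ring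
    exact Nat.le_of_mul_le_mul_right h1 (by omega)
  have hexp : u * (t + 1) = t * u + u := by ring
  have huk : u ≤ k := by omega
  have hkn : k + u ≤ n := by omega
  set a := k - u with hadef
  set b := n - k - u with hbdef
  have hab : a + b = t * u := by omega
  set q := a / t with hq
  set s := a % t with hs
  set q' := b / t with hq'
  set s' := b % t with hs'
  have hda : t * q + s = a := Nat.div_add_mod a t
  have hdb : t * q' + s' = b := Nat.div_add_mod b t
  have hsa : s < t := Nat.mod_lt _ (by omega)
  have hsb : s' < t := Nat.mod_lt _ (by omega)
  have hqq : q + q' ≤ u := by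
    have hx : t * (q + q') = t * q + t * q' := by ring
    have : t * (q + q') ≤ t * u := by omega
    exact Nat.le_of_mul_le_mul_left this (by omega)
  obtain ⟨m, hm⟩ : ∃ m, u = q + q' + m := ⟨u - (q + q'), by omega⟩
  have hss : s + s' = t * m := by
    have hx : t * (q + q' + m) = t * q + t * q' + t * m := by ring
    rw [hm] at hab
    omega
  have hm2 : m < 2 := by
    have h2 : t * m < t * 2 := by omega
    exact Nat.lt_of_mul_lt_mul_left h2
  have e1 : (r + 1) * q = t * q + 2 * q := by rw [hrt]; ring
  have e2 : (r + 1) * q' = t * q' + 2 * q' := by rw [hrt]; ring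
  interval_cases m
  · have hs0 : s = 0 := by omega
    have hs0' : s' = 0 := by omega
    rw [if_pos (Nat.dvd_of_mod_eq_zero hs0), if_pos (Nat.dvd_of_mod_eq_zero hs0')]
    omega
  · have hs1 : s ≠ 0 := by omega
    have hs1' : s' ≠ 0 := by omega
    have hnd : ¬ t ∣ a := fun h => hs1 (Nat.dvd_iff_mod_eq_zero.mp h)
    have hnd' : ¬ t ∣ b := fun h => hs1' (Nat.dvd_iff_mod_eq_zero.mp h)
    rw [if_neg hnd, if_neg hnd']
    omega
end

section
/- (Expander mixing lemma) Let G = (V, E) be a d-regular graph on n vertices with symmetric adjacency matrix A, and let λ be the second largest absolute value of an eigenvalue of A. For subsets S, T ⊆ V, let e(S,T) = Σ_{s ∈ S, t ∈ T} A[s,t]. Then |e(S,T) − d|S||T|/n| ≤ λ √(|S||T|(1 − |S|/n)(1 − |T|/n)). -/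
/-!
Let `𝟙` be the all-ones vector and `B = A - (d/n) J`. For symmetric `d`-regular `A`, `B` is
symmetric, kills `𝟙` and agrees with `A` on `𝟙ᗮ`; an eigenvector of `B` for a nonzero eigenvalue
is orthogonal to `𝟙`, so every eigenvalue of `B` is bounded by `λ` in absolute value, and hence
`|⟪x, B y⟫| ≤ λ ‖x‖ ‖y‖`. Now `e(S,T) - d|S||T|/n = ⟪1_S, B 1_T⟫ = ⟪x, B y⟫` for the centred
indicators `x = 1_S - (|S|/n) 𝟙`, `y = 1_T - (|T|/n) 𝟙`, and `‖x‖² = |S| (1 - |S|/n)`.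
-/

open Matrix Module.End

theorem LinearMap.IsSymmetric.norm_apply_le_of_forall_hasEigenvalue {𝕜 E : Type*} [RCLike 𝕜]
    [NormedAddCommGroup E] [InnerProductSpace 𝕜 E] [FiniteDimensional 𝕜 E] {T : E →ₗ[𝕜] E}
    (hT : T.IsSymmetric) {c : ℝ} (hc0 : 0 ≤ c) (hc : ∀ μ : 𝕜, HasEigenvalue T μ → ‖μ‖ ≤ c)
    (x : E) : ‖T x‖ ≤ c * ‖x‖ := by
  set b := hT.eigenvectorBasis rfl
  have hcoeff : ∀ i, ‖inner 𝕜 (b i) (T x)‖ ≤ c * ‖inner 𝕜 (b i) x‖ := fun i => by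
    rw [← hT, hT.apply_eigenvectorBasis, inner_smul_left, norm_mul, RCLike.norm_conj]
    gcongr
    exact hc _ (hT.hasEigenvalue_eigenvalues rfl i)
  refine le_of_sq_le_sq ?_ (by positivity)
  calc ‖T x‖ ^ 2 = ∑ i, ‖inner 𝕜 (b i) (T x)‖ ^ 2 := (b.sum_sq_norm_inner_right _).symm
    _ ≤ ∑ i, (c * ‖inner 𝕜 (b i) x‖) ^ 2 := by gcongr with i; exact hcoeff i
    _ = (c * ‖x‖) ^ 2 := by simp_rw [mul_pow, ← Finset.mul_sum, b.sum_sq_norm_inner_right]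

theorem Matrix.IsHermitian.abs_dotProduct_mulVec_le {n : Type*} [Fintype n] [DecidableEq n]
    {B : Matrix n n ℝ} (hB : B.IsHermitian) {c : ℝ} (hc0 : 0 ≤ c)
    (hc : ∀ (μ : ℝ) (v : n → ℝ), v ≠ 0 → B *ᵥ v = μ • v → |μ| ≤ c) (x y : n → ℝ) :
    |x ⬝ᵥ B *ᵥ y| ≤ c * √((x ⬝ᵥ x) * (y ⬝ᵥ y)) := by
  have hT : (toEuclideanLin B).IsSymmetric := isSymmetric_toEuclideanLin_iff.mpr hB
  have hnorm : ∀ z : n → ℝ, ‖(WithLp.toLp 2 z : EuclideanSpace ℝ n)‖ = √(z ⬝ᵥ z) := fun z => by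
    rw [norm_eq_sqrt_real_inner, EuclideanSpace.inner_eq_star_dotProduct]; rfl
  have hbound := hT.norm_apply_le_of_forall_hasEigenvalue hc0 (fun μ hμ => by
    obtain ⟨v, hv⟩ := hμ.exists_hasEigenvector
    refine hc μ v.ofLp (by simpa using hv.2) ?_
    simpa using congrArg WithLp.ofLp (mem_eigenspace_iff.mp hv.1))
    (WithLp.toLp 2 y)
  calc |x ⬝ᵥ B *ᵥ y|
        = |inner ℝ (WithLp.toLp 2 x : EuclideanSpace ℝ n) (toEuclideanLin B (WithLp.toLp 2 y))| := by
        simp [EuclideanSpace.inner_eq_star_dotProduct, dotProduct_comm]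
    _ ≤ ‖WithLp.toLp 2 x‖ * ‖toEuclideanLin B (WithLp.toLp 2 y)‖ := abs_real_inner_le_norm _ _
    _ ≤ ‖WithLp.toLp 2 x‖ * (c * ‖WithLp.toLp 2 y‖) := by gcongr
    _ = c * √((x ⬝ᵥ x) * (y ⬝ᵥ y)) := by
      rw [hnorm, hnorm, Real.sqrt_mul (by simpa using dotProduct_self_star_nonneg x)]
      ring

theorem Matrix.IsSymm.dotProduct_mulVec_add_const {n R : Type*} [Fintype n] [CommSemiring R]
    {B : Matrix n n R} (hB : B.IsSymm) (h1 : B *ᵥ 1 = 0) (x y : n → R) (a b : R) :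
    (x + a • 1) ⬝ᵥ B *ᵥ (y + b • 1) = x ⬝ᵥ B *ᵥ y := by
  have h1' : 1 ᵥ* B = 0 := by rw [← mulVec_transpose, hB.eq, h1]
  rw [mulVec_add, mulVec_smul, h1, smul_zero, add_zero, add_dotProduct, smul_dotProduct,
    dotProduct_mulVec 1, h1', zero_dotProduct, smul_zero, add_zero]

theorem Matrix.indicator_dotProduct_mulVec_indicator {n R : Type*} [Fintype n] [DecidableEq n]
    [NonAssocSemiring R] (M : Matrix n n R) (S T : Finset n) :
    (fun i => if i ∈ S then 1 else 0) ⬝ᵥ M *ᵥ (fun j => if j ∈ T then 1 else 0) =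
      ∑ s ∈ S, ∑ t ∈ T, M s t := by
  simp [dotProduct, mulVec, Finset.sum_ite_mem]

theorem dotProduct_self_indicator_sub_density {n : Type*} [Fintype n] [DecidableEq n]
    (S : Finset n) :
    ((fun i => if i ∈ S then (1 : ℝ) else 0) - (S.card / Fintype.card n : ℝ) • 1) ⬝ᵥ
        ((fun i => if i ∈ S then (1 : ℝ) else 0) - (S.card / Fintype.card n : ℝ) • 1) =
      (S.card : ℝ) * (1 - S.card / Fintype.card n) := by
  simp only [sub_dotProduct, dotProduct_sub, smul_dotProduct, dotProduct_smul, dotProduct_one,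
    one_dotProduct]
  simp only [dotProduct, mul_ite, mul_one, mul_zero, Finset.sum_ite_mem, Finset.univ_inter,
    Finset.inter_self, Finset.sum_const, nsmul_eq_mul, smul_eq_mul, Pi.sub_apply, Pi.smul_apply,
    Pi.one_apply, Finset.sum_sub_distrib, Finset.card_univ]
  rcases eq_or_ne (Fintype.card n) 0 with hn | hn
  · have : S.card = 0 := Nat.eq_zero_of_le_zero (hn ▸ S.card_le_univ)
    simp [this]
  · field_simp
    ring

section CenteredAdjacency

variable {V : Type*} [Fintype V]

noncomputable def centeredAdjacency (A : Matrix V V ℝ) (d : ℝ) : Matrix V V ℝ :=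
  Matrix.of fun i j => A i j - d / Fintype.card V

variable {A : Matrix V V ℝ} {d : ℝ}

theorem centeredAdjacency_mulVec_apply (v : V → ℝ) (i : V) :
    (centeredAdjacency A d *ᵥ v) i = (A *ᵥ v) i - d / Fintype.card V * ∑ j, v j := by
  simp [centeredAdjacency, mulVec, dotProduct, sub_mul, Finset.sum_sub_distrib, Finset.mul_sum]

theorem Matrix.IsSymm.centeredAdjacency (hA : A.IsSymm) : (centeredAdjacency A d).IsSymm :=
  IsSymm.ext fun i j => by simp [_root_.centeredAdjacency, hA.apply i j]

theorem centeredAdjacency_mulVec_one (hreg : ∀ i, ∑ j, A i j = d) :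
    centeredAdjacency A d *ᵥ 1 = 0 := by
  ext i
  have : Nonempty V := ⟨i⟩
  rw [centeredAdjacency_mulVec_apply]
  simp [mulVec, dotProduct, hreg]

theorem abs_le_of_centeredAdjacency_mulVec_eq_smul (hA : A.IsSymm)
    (hreg : ∀ i, ∑ j, A i j = d) {lam : ℝ} (hlam0 : 0 ≤ lam)
    (hlam : ∀ (μ : ℝ) (v : V → ℝ), v ≠ 0 → ∑ i, v i = 0 → A *ᵥ v = μ • v → |μ| ≤ lam)
    {μ : ℝ} {v : V → ℝ} (hv : v ≠ 0) (hμ : centeredAdjacency A d *ᵥ v = μ • v) : |μ| ≤ lam := by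
  rcases eq_or_ne μ 0 with rfl | hμ0
  · simpa using hlam0
  have hsum : ∑ i, v i = 0 := by
    have h := congrArg (1 ⬝ᵥ ·) hμ
    simp only [dotProduct_mulVec, ← mulVec_transpose, hA.centeredAdjacency.eq,
      centeredAdjacency_mulVec_one hreg, zero_dotProduct, dotProduct_smul, one_dotProduct,
      smul_eq_mul] at h
    exact (mul_eq_zero.mp h.symm).resolve_left hμ0
  refine hlam μ v hv hsum (funext fun i => ?_)
  simpa [centeredAdjacency_mulVec_apply, hsum] using congrFun hμ i

theorem indicator_dotProduct_centeredAdjacency_mulVec_indicator [DecidableEq V]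
    (S T : Finset V) :
    (fun i => if i ∈ S then 1 else 0) ⬝ᵥ centeredAdjacency A d *ᵥ
        (fun j => if j ∈ T then 1 else 0) =
      ∑ s ∈ S, ∑ t ∈ T, A s t - d * S.card * T.card / Fintype.card V := by
  rw [indicator_dotProduct_mulVec_indicator]
  simp only [centeredAdjacency, of_apply, Finset.sum_sub_distrib, Finset.sum_const, nsmul_eq_mul]
  ring

end CenteredAdjacency

theorem stmt_16_general (V : Type) [Fintype V] (d : ℕ) (A : Matrix V V ℝ)
    (hsymm : A.IsSymm)
    (hreg : ∀ x : V, ∑ y, A x y = d)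
    (lam : ℝ)
    (hlam : IsGreatest {c : ℝ | ∃ (μ : ℝ) (v : V → ℝ), v ≠ 0 ∧ (∑ x, v x) = 0 ∧
        A.mulVec v = μ • v ∧ c = |μ|} lam)
    (S T : Finset V) :
    |(∑ s ∈ S, ∑ t ∈ T, A s t) - d * S.card * T.card / (Fintype.card V)| ≤
      lam * Real.sqrt (S.card * T.card * (1 - S.card / Fintype.card V)
        * (1 - T.card / Fintype.card V)) := by
  classical
  have hlam0 : 0 ≤ lam := by
    obtain ⟨μ, -, -, -, -, rfl⟩ := hlam.1
    exact abs_nonneg μ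
  have hB := hsymm.centeredAdjacency (d := d)
  have key := (isHermitian_iff_isSymm.mpr hB).abs_dotProduct_mulVec_le hlam0
    (fun μ v hv hμ => abs_le_of_centeredAdjacency_mulVec_eq_smul hsymm hreg hlam0
      (fun μ v hv hsum hAv => hlam.2 ⟨μ, v, hv, hsum, hAv, rfl⟩) hv hμ)
    ((fun i => if i ∈ S then 1 else 0) - (S.card / Fintype.card V : ℝ) • 1)
    ((fun i => if i ∈ T then 1 else 0) - (T.card / Fintype.card V : ℝ) • 1)
  rw [← hB.dotProduct_mulVec_add_const (centeredAdjacency_mulVec_one hreg), sub_add_cancel,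
    sub_add_cancel, indicator_dotProduct_centeredAdjacency_mulVec_indicator,
    dotProduct_self_indicator_sub_density, dotProduct_self_indicator_sub_density] at key
  convert key using 3
  ring

/-- **Expander mixing lemma.** Let `A` be the symmetric 0-1 adjacency matrix
of a `d`-regular graph on `n` vertices, and let `λ` be the second largest absolute value of an
eigenvalue of `A` (the largest value `|μ|` over eigenvalues `μ` with an eigenvector orthogonal
to the all-ones vector). For `S, T ⊆ V` and `e(S,T) = Σ_{s∈S,t∈T} A[s,t]`,
`|e(S,T) − d|S||T|/n| ≤ λ √(|S||T|(1−|S|/n)(1−|T|/n))`. -/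
theorem stmt_16 (V : Type) [Fintype V] (d : ℕ) (A : Matrix V V ℝ)
    (hsymm : A.IsSymm)
    (h01 : ∀ x y : V, A x y = 0 ∨ A x y = 1)
    (hreg : ∀ x : V, ∑ y, A x y = d)
    (lam : ℝ)
    (hlam : IsGreatest {c : ℝ | ∃ (μ : ℝ) (v : V → ℝ), v ≠ 0 ∧ (∑ x, v x) = 0 ∧
        A.mulVec v = μ • v ∧ c = |μ|} lam)
    (S T : Finset V) :
    |(∑ s ∈ S, ∑ t ∈ T, A s t) - d * S.card * T.card / (Fintype.card V)| ≤
      lam * Real.sqrt (S.card * T.card * (1 - S.card / Fintype.card V)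
        * (1 - T.card / Fintype.card V)) :=
  stmt_16_general V d A hsymm hreg lam hlam S T
end

section
/- Let u = (u_1, ..., u_n) ∈ F_q^n with all u_i ≠ 0, and let α_1, ..., α_n ∈ F_q be distinct, satisfying Σ_{i=1}^n u_i² α_i^j = 0 for all 0 ≤ j ≤ n−2. Then for any two polynomials f_1, f_2 ∈ F_q[x] with deg(f_1 f_2 mod h) ≤ n − 2, where h(x) = ∏_i (x − α_i), the vectors (u_1 f_1(α_1), ..., u_n f_1(α_n)) and (u_1 f_2(α_1), ..., u_n f_2(α_n)) are orthogonal: Σ_{i=1}^n u_i² f_1(α_i) f_2(α_i) = 0. -/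
open Polynomial

/-! Since `h` vanishes at every `α i`, `f₁ f₂` and `z = f₁ f₂ mod h` agree there, so the sum equals
`Σ_i u_i² z(α_i)`; expanding `z` in monomials of degree `≤ n - 2` turns it into a combination of the
vanishing moments `Σ_i u_i² α_i^j`. -/

namespace Polynomial

theorem eval_modByMonic_eq_self_of_root {R : Type*} [CommRing R] {p q : R[X]} {x : R}
    (hx : q.eval x = 0) : (p %ₘ q).eval x = p.eval x :=
  eval₂_modByMonic_eq_self_of_root hx

theorem sum_mul_eval_eq_zero_of_sum_mul_pow_eq_zero {R ι : Type*} [CommSemiring R]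
    (s : Finset ι) (w x : ι → R) {d : ℕ} (hmom : ∀ j ≤ d, ∑ i ∈ s, w i * x i ^ j = 0)
    {p : R[X]} (hp : p.degree ≤ d) : ∑ i ∈ s, w i * p.eval (x i) = 0 := by
  have hdeg : p.natDegree < d + 1 := Nat.lt_succ_of_le (natDegree_le_iff_degree_le.mpr hp)
  calc ∑ i ∈ s, w i * p.eval (x i)
      = ∑ j ∈ Finset.range (d + 1), p.coeff j * ∑ i ∈ s, w i * x i ^ j := by
        simp_rw [eval_eq_sum_range' hdeg, Finset.mul_sum]
        rw [Finset.sum_comm]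
        refine Finset.sum_congr rfl fun j _ => Finset.sum_congr rfl fun i _ => ?_
        ring
    _ = 0 := Finset.sum_eq_zero fun j hj =>
        by rw [hmom j (Nat.lt_succ_iff.mp (Finset.mem_range.mp hj)), mul_zero]

end Polynomial

theorem stmt_17_general (F : Type) [Field F] (n : ℕ)
    (α : Fin n → F)
    (u : Fin n → F)
    (hmom : ∀ j : ℕ, j ≤ n - 2 → ∑ i, (u i) ^ 2 * (α i) ^ j = 0)
    (f₁ f₂ : Polynomial F)
    (hdeg : ((f₁ * f₂) %ₘ (∏ i, (X - C (α i)))).degree ≤ ((n - 2 : ℕ) : WithBot ℕ)) :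
    ∑ i, (u i) ^ 2 * f₁.eval (α i) * f₂.eval (α i) = 0 := by
  have hroot : ∀ i, (∏ k, (X - C (α k))).eval (α i) = 0 := fun i => by
    rw [eval_prod]
    exact Finset.prod_eq_zero (Finset.mem_univ i) (by simp)
  have hrem : ∀ i, f₁.eval (α i) * f₂.eval (α i)
      = ((f₁ * f₂) %ₘ ∏ k, (X - C (α k))).eval (α i) := fun i => by
    rw [eval_modByMonic_eq_self_of_root (hroot i), eval_mul]
  simp only [mul_assoc, hrem]
  exact sum_mul_eval_eq_zero_of_sum_mul_pow_eq_zero _ _ _ hmom hdeg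

/-- Let `u ∈ F_q^n` with all `u_i ≠ 0` and distinct `α_1, …, α_n ∈ F_q`
satisfying `Σ_i u_i² α_i^j = 0` for all `0 ≤ j ≤ n−2`. Then for polynomials `f₁, f₂` with
`deg(f₁ f₂ mod h) ≤ n − 2`, where `h(x) = ∏_i (x − α_i)`, we have
`Σ_i u_i² f₁(α_i) f₂(α_i) = 0`. -/
theorem stmt_17 (F : Type) [Field F] (n : ℕ) (hn : 2 ≤ n)
    (α : Fin n → F) (hinj : Function.Injective α)
    (u : Fin n → F) (hu : ∀ i, u i ≠ 0)
    (hmom : ∀ j : ℕ, j ≤ n - 2 → ∑ i, (u i) ^ 2 * (α i) ^ j = 0)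
    (f₁ f₂ : Polynomial F)
    (hdeg : ((f₁ * f₂) %ₘ (∏ i, (X - C (α i)))).degree ≤ ((n - 2 : ℕ) : WithBot ℕ)) :
    ∑ i, (u i) ^ 2 * f₁.eval (α i) * f₂.eval (α i) = 0 :=
  stmt_17_general F n α u hmom f₁ f₂ hdeg
end
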